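/- In the rational quaternion algebra B = (6, -3)/ℚ with generators i, j satisfying i² = 6, j² = -3, ji = -ij, and k = ij, the ℤ-lattice O = ℤ·1 + ℤ·(i/2 + k/6) + ℤ·(1/2 + j/2) + ℤ·(k/3) is a subring of B (closed under multiplication and containing 1). -/

import Mathlib

/-!
Writing elements of `O` in the basis `1, i/2 + k/6, (1 + j)/2, k/3`, the product of two such
integer combinations is again an integer combination: the sixteen products of basis elements
have integral coordinates, so the structure constants of `O` are integers.
-/

open scoped Quaternion

/-- The ℤ-lattice O = ℤ·1 + ℤ·(i/2 + k/6) + ℤ·(1/2 + j/2) + ℤ·(k/3) in the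
quaternion algebra (6,-3)/ℚ. -/
def quatOrder63 : Set ℍ[ℚ, 6, -3] :=
  {x | ∃ a b c d : ℤ,
    x = (a : ℚ) • (1 : ℍ[ℚ, 6, -3])
      + (b : ℚ) • (⟨0, 1/2, 0, 1/6⟩ : ℍ[ℚ, 6, -3])
      + (c : ℚ) • (⟨1/2, 0, 1/2, 0⟩ : ℍ[ℚ, 6, -3])
      + (d : ℚ) • (⟨0, 0, 0, 1/3⟩ : ℍ[ℚ, 6, -3])}

def quatOrder63Comb (a b c d : ℤ) : ℍ[ℚ, 6, -3] :=
  (a : ℚ) • (1 : ℍ[ℚ, 6, -3])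
    + (b : ℚ) • (⟨0, 1/2, 0, 1/6⟩ : ℍ[ℚ, 6, -3])
    + (c : ℚ) • (⟨1/2, 0, 1/2, 0⟩ : ℍ[ℚ, 6, -3])
    + (d : ℚ) • (⟨0, 0, 0, 1/3⟩ : ℍ[ℚ, 6, -3])

theorem mem_quatOrder63 {x : ℍ[ℚ, 6, -3]} :
    x ∈ quatOrder63 ↔ ∃ a b c d : ℤ, x = quatOrder63Comb a b c d :=
  Iff.rfl

theorem quatOrder63Comb_one_zero_zero_zero : quatOrder63Comb 1 0 0 0 = 1 := by
  ext <;> simp [quatOrder63Comb]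

theorem quatOrder63Comb_mul (a b c d e f g h : ℤ) :
    quatOrder63Comb a b c d * quatOrder63Comb e f g h =
      quatOrder63Comb (a*e + 2*b*f - c*g + 2*d*f + 2*d*h)
        (a*f + b*e + c*f + c*h - d*g)
        (a*g + 2*b*h + c*e + c*g - 2*d*f)
        (a*h + b*g - c*f + d*e + d*g) := by
  ext <;> simp [quatOrder63Comb, QuaternionAlgebra.re_mul, QuaternionAlgebra.imI_mul,
    QuaternionAlgebra.imJ_mul, QuaternionAlgebra.imK_mul] <;> ring

theorem quatOrder63_one_mem_and_mul_closed :
    (1 : ℍ[ℚ, 6, -3]) ∈ quatOrder63 ∧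
    ∀ x ∈ quatOrder63, ∀ y ∈ quatOrder63, x * y ∈ quatOrder63 := by
  refine ⟨⟨1, 0, 0, 0, quatOrder63Comb_one_zero_zero_zero.symm⟩, ?_⟩
  simp only [mem_quatOrder63]
  rintro x ⟨a, b, c, d, rfl⟩ y ⟨e, f, g, h, rfl⟩
  exact ⟨_, _, _, _, quatOrder63Comb_mul a b c d e f g h⟩
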